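/- Let h ∈ ℂ^M be a Rician channel block with parameters (ξ, β_L, β_N, a), and set β = ξ·β_L + β_N. Then E[‖h‖⁴] = M²β² + M·β_N² + 2M·ξ·β_L·β_N. -/

import Mathlib

/-!
Write `h_m = c w a_m + g_m` with `c = ξ √β_L` (so `c² = ξ β_L`) and `w = e^{-iψ}`. Then
`∑ ‖h_m‖² = S + 2c Re(w Z)` with `S = M c² + ∑ ‖g_m‖²` and `Z = ∑ a_m conj(g_m)`, and since
`‖w‖ = 1`, its square is `S² + 2c² ‖Z‖² + Re(w A + w² B)` with `A`, `B` functions of `g`.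
The phase is uniform and independent of `g`, so `E[w] = E[w²] = 0` removes the last term.
What remains are second moments of sums of independent variables: `E[S²] = (E S)² + ∑ Var ‖g_m‖²` with `Var ‖g_m‖² = β_N²`, and
`E ‖Z‖² = ∑ E ‖g_m‖² = M β_N` because the summands of `Z` are centred.
-/

open MeasureTheory ProbabilityTheory Finset

noncomputable section

/-- The uniform distribution on `[0, 2π)`. -/
def uniformAngle : Measure ℝ :=
  (ENNReal.ofReal (2 * Real.pi))⁻¹ • (volume.restrict (Set.Ico (0 : ℝ) (2 * Real.pi)))

/-- A Rician channel block with parameters `(ξ, βL, βN, a)`: a random vector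
`h = ξ·√βL·e^{−iψ}·a + g ∈ ℂ^M`, where `ξ ∈ {0,1}`, `βL, βN ≥ 0`, `a` is a deterministic
vector with unit-modulus entries, `ψ` is uniformly distributed on `[0, 2π)`, and `g` is
independent of `ψ` with independent coordinates satisfying `E[g_m] = 0`, `E[g_m²] = 0`,
`E[|g_m|²] = βN` and `E[|g_m|⁴] = 2βN²` (as for `CN(0, βN)`). -/
structure IsRicianBlock {Ω : Type*} [MeasurableSpace Ω] (μ : Measure Ω) {M : ℕ}
    (ξ βL βN : ℝ) (a : Fin M → ℂ) (h : Ω → Fin M → ℂ) : Prop where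
  xi01 : ξ = 0 ∨ ξ = 1
  betaL_nonneg : 0 ≤ βL
  betaN_nonneg : 0 ≤ βN
  unit_modulus : ∀ m, ‖a m‖ = 1
  decomp : ∃ (ψ : Ω → ℝ) (g : Ω → Fin M → ℂ),
      Measurable ψ ∧ Measurable g ∧
      (∀ ω m, h ω m
        = (ξ : ℂ) * (Real.sqrt βL : ℂ) * Complex.exp (-(Complex.I * (ψ ω : ℂ))) * a m
          + g ω m) ∧
      μ.map ψ = uniformAngle ∧
      IndepFun ψ g μ ∧
      iIndepFun (fun m ω => g ω m) μ ∧
      (∀ m, Integrable (fun ω => ‖g ω m‖ ^ 4) μ) ∧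
      (∀ m, ∫ ω, g ω m ∂μ = 0) ∧
      (∀ m, ∫ ω, (g ω m) ^ 2 ∂μ = 0) ∧
      (∀ m, ∫ ω, (‖g ω m‖ ^ 2 : ℝ) ∂μ = βN) ∧
      (∀ m, ∫ ω, (‖g ω m‖ ^ 4 : ℝ) ∂μ = 2 * βN ^ 2)

open Complex ComplexConjugate

theorem integral_uniformAngle {E : Type*} [NormedAddCommGroup E] [NormedSpace ℝ E] (f : ℝ → E) :
    ∫ x, f x ∂uniformAngle = (2 * Real.pi)⁻¹ • ∫ x in (0 : ℝ)..2 * Real.pi, f x := by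
  rw [uniformAngle, integral_smul_measure, intervalIntegral.integral_of_le Real.two_pi_pos.le,
    integral_Ioc_eq_integral_Ioo, ← integral_Ico_eq_integral_Ioo,
    ENNReal.toReal_inv, ENNReal.toReal_ofReal Real.two_pi_pos.le]

theorem integral_uniformAngle_cexp_neg_pow {k : ℕ} (hk : k ≠ 0) :
    ∫ x : ℝ, cexp (-(I * x)) ^ k ∂uniformAngle = 0 := by
  have hc : -(k * I) ≠ 0 := by simp [hk]
  simp_rw [← Complex.exp_nat_mul, show ∀ x : ℝ, (k : ℂ) * -(I * x) = -(k * I) * x by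
    intro x; ring]
  rw [integral_uniformAngle, integral_exp_mul_complex hc,
    show -(k * I) * ↑(2 * Real.pi) = -(k * (2 * Real.pi * I)) by push_cast; ring,
    Complex.exp_neg, Complex.exp_nat_mul_two_pi_mul_I]
  simp

theorem norm_cexp_neg_I_mul (x : ℝ) : ‖cexp (-(I * x))‖ = 1 := by
  simp [Complex.norm_exp]

theorem integral_cexp_neg_pow_mul_eq_zero {Ω : Type*} [MeasurableSpace Ω] {μ : Measure Ω}
    {ψ : Ω → ℝ} {Y : Ω → ℂ} (hψ : Measurable ψ) (hY : AEMeasurable Y μ)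
    (hψμ : μ.map ψ = uniformAngle) (hψY : IndepFun ψ Y μ) {k : ℕ} (hk : k ≠ 0) :
    ∫ ω, cexp (-(I * ψ ω)) ^ k * Y ω ∂μ = 0 := by
  have hW : ∫ ω, cexp (-(I * ψ ω)) ^ k ∂μ = 0 := by
    rw [← integral_uniformAngle_cexp_neg_pow hk, ← hψμ,
      integral_map hψ.aemeasurable (by fun_prop)]
  have := hψY.integral_fun_comp_mul_comp (f := fun x : ℝ => cexp (-(I * x)) ^ k) (g := id)
    hψ.aemeasurable hY (by fun_prop) aestronglyMeasurable_id
  simpa [hW] using this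

theorem norm_sq_ofReal_mul_add {w a : ℂ} (hw : ‖w‖ = 1) (ha : ‖a‖ = 1) (c : ℝ) (z : ℂ) :
    ‖(c : ℂ) * w * a + z‖ ^ 2 = c ^ 2 + 2 * c * (w * (a * conj z)).re + ‖z‖ ^ 2 := by
  rw [Complex.sq_norm, Complex.normSq_add, Complex.normSq_mul, Complex.normSq_mul,
    Complex.normSq_ofReal, ← Complex.sq_norm, ← Complex.sq_norm, hw, ha, ← Complex.sq_norm,
    show (c : ℂ) * w * a * conj z = c * (w * (a * conj z)) by ring, Complex.re_ofReal_mul]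
  ring

theorem sum_norm_sq_ofReal_mul_add {ι : Type*} [Fintype ι] {w : ℂ} {a : ι → ℂ} (hw : ‖w‖ = 1)
    (ha : ∀ i, ‖a i‖ = 1) (c : ℝ) (z : ι → ℂ) :
    ∑ i, ‖(c : ℂ) * w * a i + z i‖ ^ 2
      = (Fintype.card ι * c ^ 2 + ∑ i, ‖z i‖ ^ 2) + 2 * c * (w * ∑ i, a i * conj (z i)).re := by
  simp only [norm_sq_ofReal_mul_add hw (ha _), Finset.sum_add_distrib, Finset.mul_sum,
    Complex.re_sum, Finset.sum_const, Finset.card_univ, nsmul_eq_mul]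
  ring

-- `Re(wz)² = (‖z‖² + Re(w²z²)) / 2` when `‖w‖ = 1`.
theorem sq_add_two_mul_re_mul (s c : ℝ) {w : ℂ} (hw : ‖w‖ = 1) (z : ℂ) :
    (s + 2 * c * (w * z).re) ^ 2
      = s ^ 2 + 2 * c ^ 2 * ‖z‖ ^ 2 + (w * (4 * c * s * z) + w ^ 2 * (2 * c ^ 2 * z ^ 2)).re := by
  have hw' : w.re * w.re + w.im * w.im = 1 := by
    rw [← Complex.normSq_apply, ← Complex.sq_norm, hw, one_pow]
  rw [Complex.sq_norm, Complex.normSq_apply]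
  simp only [Complex.add_re, Complex.mul_re, Complex.mul_im,
    sq, Complex.ofReal_re, Complex.ofReal_im, Complex.re_ofNat, Complex.im_ofNat]
  linear_combination (2 * c ^ 2 * (z.re * z.re + z.im * z.im)) * hw'

theorem integral_sq_add_two_mul_re_cexp_mul {Ω : Type*} [MeasurableSpace Ω] {μ : Measure Ω}
    [IsProbabilityMeasure μ] {ψ S : Ω → ℝ} {Z : Ω → ℂ} (hψ : Measurable ψ)
    (hψμ : μ.map ψ = uniformAngle) (hψSZ : IndepFun ψ (fun ω => (S ω, Z ω)) μ)
    (hS : MemLp S 2 μ) (hZ : MemLp Z 2 μ) (c : ℝ) :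
    ∫ ω, (S ω + 2 * c * (cexp (-(I * ψ ω)) * Z ω).re) ^ 2 ∂μ
      = ∫ ω, S ω ^ 2 ∂μ + 2 * c ^ 2 * ∫ ω, ‖Z ω‖ ^ 2 ∂μ := by
  set A : Ω → ℂ := fun ω => 4 * c * S ω * Z ω
  set B : Ω → ℂ := fun ω => 2 * c ^ 2 * Z ω ^ 2
  have hSc : MemLp (fun ω => (S ω : ℂ)) 2 μ := hS.ofReal
  have hA : Integrable A μ := by
    simpa only [A, Pi.mul_apply, mul_assoc] using (hSc.integrable_mul hZ).const_mul (4 * c : ℂ)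
  have hB : Integrable B μ := by
    simpa only [B, Pi.mul_apply, ← sq] using (hZ.integrable_mul hZ).const_mul (2 * c ^ 2 : ℂ)
  have hWk : ∀ {Y : Ω → ℂ} (k : ℕ), Integrable Y μ →
      Integrable (fun ω => cexp (-(I * ψ ω)) ^ k * Y ω) μ :=
    fun k hY => hY.bdd_mul (c := 1) (by fun_prop) (ae_of_all _ fun ω => by
      simp [norm_pow, norm_cexp_neg_I_mul])
  have hindep : ∀ F : ℝ × ℂ → ℂ, Measurable F → IndepFun ψ (fun ω => F (S ω, Z ω)) μ :=
    fun F hF => hψSZ.comp measurable_id hF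
  have hphase : ∫ ω, (cexp (-(I * ψ ω)) ^ 1 * A ω + cexp (-(I * ψ ω)) ^ 2 * B ω) ∂μ = 0 := by
    rw [integral_add (hWk 1 hA) (hWk 2 hB),
      integral_cexp_neg_pow_mul_eq_zero hψ hA.aemeasurable hψμ
        (hindep (fun p => 4 * c * p.1 * p.2) (by fun_prop)) one_ne_zero,
      integral_cexp_neg_pow_mul_eq_zero hψ hB.aemeasurable hψμ
        (hindep (fun p => 2 * c ^ 2 * p.2 ^ 2) (by fun_prop)) two_ne_zero, add_zero]
  have hpt : ∀ ω, (S ω + 2 * c * (cexp (-(I * ψ ω)) * Z ω).re) ^ 2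
      = (S ω ^ 2 + 2 * c ^ 2 * ‖Z ω‖ ^ 2)
        + (cexp (-(I * ψ ω)) ^ 1 * A ω + cexp (-(I * ψ ω)) ^ 2 * B ω).re := fun ω => by
    rw [pow_one, sq_add_two_mul_re_mul _ _ (norm_cexp_neg_I_mul _)]
  have hV : Integrable (fun ω => cexp (-(I * ψ ω)) ^ 1 * A ω + cexp (-(I * ψ ω)) ^ 2 * B ω) μ :=
    (hWk 1 hA).add (hWk 2 hB)
  have hVre : ∫ ω, (cexp (-(I * ψ ω)) ^ 1 * A ω + cexp (-(I * ψ ω)) ^ 2 * B ω).re ∂μ = 0 := by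
    have := integral_re hV
    simp only [RCLike.re_to_complex] at this
    rw [this, hphase, Complex.zero_re]
  have hZ2 : Integrable (fun ω => ‖Z ω‖ ^ 2) μ := hZ.integrable_norm_pow two_ne_zero
  have hSZ2 : Integrable (fun ω => S ω ^ 2 + 2 * c ^ 2 * ‖Z ω‖ ^ 2) μ :=
    hS.integrable_sq.add (hZ2.const_mul _)
  simp_rw [hpt]
  rw [integral_add hSZ2 (by simpa only [RCLike.re_to_complex] using hV.re), hVre, add_zero,
    integral_add hS.integrable_sq (hZ2.const_mul _), integral_const_mul]

theorem memLp_norm_sq_of_integrable_norm_pow_four {E : Type*} [NormedAddCommGroup E]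
    {Ω : Type*} [MeasurableSpace Ω] {μ : Measure Ω} {f : Ω → E}
    (hf : AEStronglyMeasurable f μ) (h4 : Integrable (fun ω => ‖f ω‖ ^ 4) μ) :
    MemLp (fun ω => ‖f ω‖ ^ 2) 2 μ :=
  (memLp_two_iff_integrable_sq (f := fun ω => ‖f ω‖ ^ 2) (hf.norm.pow 2)).2
    (by simpa only [← pow_mul] using h4)

theorem memLp_two_of_integrable_norm_pow_four {E : Type*} [NormedAddCommGroup E]
    {Ω : Type*} [MeasurableSpace Ω] {μ : Measure Ω} [IsFiniteMeasure μ] {f : Ω → E}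
    (hf : AEStronglyMeasurable f μ) (h4 : Integrable (fun ω => ‖f ω‖ ^ 4) μ) : MemLp f 2 μ :=
  (memLp_two_iff_integrable_sq_norm hf).2
    ((memLp_norm_sq_of_integrable_norm_pow_four hf h4).integrable one_le_two)

section IndependentSums

variable {Ω ι : Type*} [MeasurableSpace Ω] {μ : Measure Ω} [IsProbabilityMeasure μ] [Fintype ι]

theorem integral_const_add_sum_sq {X : ι → Ω → ℝ} (hX : ∀ i, MemLp (X i) 2 μ)
    (hXX : Pairwise fun i j => IndepFun (X i) (X j) μ) (b : ℝ) :
    ∫ ω, (b + ∑ i, X i ω) ^ 2 ∂μ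
      = (b + ∑ i, ∫ ω, X i ω ∂μ) ^ 2 + ∑ i, variance (X i) μ := by
  have hXi : ∀ i, Integrable (X i) μ := fun i => (hX i).integrable one_le_two
  have hS : MemLp (∑ i, X i) 2 μ := memLp_finsetSum' _ fun i _ => hX i
  have hvar := variance_eq_sub (X := fun ω => b + (∑ i, X i) ω) ((memLp_const b).add hS)
  rw [variance_const_add hS.aestronglyMeasurable,
    IndepFun.variance_sum (fun i _ => hX i) fun i _ j _ hij => hXX hij] at hvar
  simp only [Pi.pow_apply, Finset.sum_apply] at hvar
  rw [integral_add (integrable_const b) (integrable_finsetSum _ fun i _ => hXi i),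
    integral_finsetSum _ fun i _ => hXi i, integral_const, probReal_univ, one_smul] at hvar
  linarith

theorem integral_norm_sum_sq_of_pairwise_indepFun {Y : ι → Ω → ℂ} (hY : ∀ i, MemLp (Y i) 2 μ)
    (hYY : Pairwise fun i j => IndepFun (Y i) (Y j) μ) (hY0 : ∀ i, ∫ ω, Y i ω ∂μ = 0) :
    ∫ ω, ‖∑ i, Y i ω‖ ^ 2 ∂μ = ∑ i, ∫ ω, ‖Y i ω‖ ^ 2 ∂μ := by
  have hsq : ∀ z : ℂ, ‖z‖ ^ 2 = z.re ^ 2 + z.im ^ 2 := fun z => by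
    rw [Complex.sq_norm, Complex.normSq_apply]; ring
  have hre0 : ∀ i, ∫ ω, (Y i ω).re ∂μ = 0 := fun i => by
    simpa [hY0 i] using integral_re ((hY i).integrable one_le_two)
  have him0 : ∀ i, ∫ ω, (Y i ω).im ∂μ = 0 := fun i => by
    simpa [hY0 i] using integral_im ((hY i).integrable one_le_two)
  have hYre : ∀ i, MemLp (fun ω => (Y i ω).re) 2 μ := fun i => (hY i).re
  have hYim : ∀ i, MemLp (fun ω => (Y i ω).im) 2 μ := fun i => (hY i).im
  have hre := integral_const_add_sum_sq hYre
    (fun i j hij => (hYY hij).comp measurable_re measurable_re) 0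
  have him := integral_const_add_sum_sq hYim
    (fun i j hij => (hYY hij).comp measurable_im measurable_im) 0
  simp only [zero_add, hre0, him0, Finset.sum_const_zero, ne_eq, OfNat.ofNat_ne_zero,
    not_false_eq_true, zero_pow] at hre him
  have hsum_sq : ∀ (X : ι → Ω → ℝ), (∀ i, MemLp (X i) 2 μ) →
      Integrable (fun ω => (∑ i, X i ω) ^ 2) μ := fun X hX =>
    (memLp_finsetSum _ fun i _ => hX i).integrable_sq
  calc ∫ ω, ‖∑ i, Y i ω‖ ^ 2 ∂μ
      = ∫ ω, ((∑ i, (Y i ω).re) ^ 2 + (∑ i, (Y i ω).im) ^ 2) ∂μ := by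
        simp only [hsq, Complex.re_sum, Complex.im_sum]
    _ = ∑ i, (∫ ω, (Y i ω).re ^ 2 ∂μ + ∫ ω, (Y i ω).im ^ 2 ∂μ) := by
        rw [integral_add (hsum_sq _ hYre) (hsum_sq _ hYim), hre, him, ← Finset.sum_add_distrib]
        refine Finset.sum_congr rfl fun i _ => ?_
        rw [variance_of_integral_eq_zero (hYre i).aemeasurable (hre0 i),
          variance_of_integral_eq_zero (hYim i).aemeasurable (him0 i)]
    _ = ∑ i, ∫ ω, ‖Y i ω‖ ^ 2 ∂μ := by
        simp only [hsq]
        refine Finset.sum_congr rfl fun i _ => (integral_add ?_ ?_).symm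
        exacts [(hYre i).integrable_sq, (hYim i).integrable_sq]

theorem integral_const_add_sum_norm_sq_sq {E : Type*} [NormedAddCommGroup E] [MeasurableSpace E]
    [OpensMeasurableSpace E] {Y : ι → Ω → E} (hY : ∀ i, AEStronglyMeasurable (Y i) μ)
    (hYY : Pairwise fun i j => IndepFun (Y i) (Y j) μ)
    (h4 : ∀ i, Integrable (fun ω => ‖Y i ω‖ ^ 4) μ) {β : ℝ}
    (hβ : ∀ i, ∫ ω, ‖Y i ω‖ ^ 2 ∂μ = β) (hβ4 : ∀ i, ∫ ω, ‖Y i ω‖ ^ 4 ∂μ = 2 * β ^ 2) (b : ℝ) :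
    ∫ ω, (b + ∑ i, ‖Y i ω‖ ^ 2) ^ 2 ∂μ = (b + Fintype.card ι * β) ^ 2 + Fintype.card ι * β ^ 2 := by
  have hY2 := fun i => memLp_norm_sq_of_integrable_norm_pow_four (hY i) (h4 i)
  have hvar : ∀ i, variance (fun ω => ‖Y i ω‖ ^ 2) μ = β ^ 2 := fun i => by
    rw [variance_eq_sub (hY2 i)]
    simp only [Pi.pow_apply, ← pow_mul, hβ4, hβ]
    ring
  rw [integral_const_add_sum_sq hY2 (fun i j hij =>
    (hYY hij).comp (φ := fun z => ‖z‖ ^ 2) (ψ := fun z => ‖z‖ ^ 2) (by fun_prop) (by fun_prop)) b]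
  simp [hβ, hvar]

theorem integral_norm_sum_mul_conj_sq {Y : ι → Ω → ℂ} (hY : ∀ i, MemLp (Y i) 2 μ)
    (hYY : Pairwise fun i j => IndepFun (Y i) (Y j) μ) (hY0 : ∀ i, ∫ ω, Y i ω ∂μ = 0)
    (a : ι → ℂ) :
    ∫ ω, ‖∑ i, a i * conj (Y i ω)‖ ^ 2 ∂μ = ∑ i, ‖a i‖ ^ 2 * ∫ ω, ‖Y i ω‖ ^ 2 ∂μ := by
  rw [integral_norm_sum_sq_of_pairwise_indepFun (Y := fun i ω => a i * conj (Y i ω))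
    (fun i => (hY i).star.const_mul (a i))
    (fun i j hij => (hYY hij).comp (φ := fun z => a i * conj z) (ψ := fun z => a j * conj z)
      (by fun_prop) (by fun_prop))
    (fun i => by rw [integral_const_mul, integral_conj, hY0 i, map_zero, mul_zero])]
  simp_rw [norm_mul, Complex.norm_conj, mul_pow, integral_const_mul]

end IndependentSums

theorem stmt7_general {Ω : Type*} [MeasurableSpace Ω] (μ : Measure Ω) [IsProbabilityMeasure μ]
    (M : ℕ) (ξ βL βN : ℝ) (a : Fin M → ℂ) (h : Ω → Fin M → ℂ)
    (hR : IsRicianBlock μ ξ βL βN a h) :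
    ∫ ω, (∑ m, ‖h ω m‖ ^ 2) ^ 2 ∂μ
      = (M : ℝ) ^ 2 * (ξ * βL + βN) ^ 2 + M * βN ^ 2 + 2 * M * ξ * βL * βN := by
  obtain ⟨hξ, hβL, -, ha, ψ, g, hψ, hg, hdec, hψμ, hψg, hgg, hg4, hg0, -, hg2, hg4'⟩ := hR
  have hc : (ξ * √βL) ^ 2 = ξ * βL := by rcases hξ with rfl | rfl <;> simp [Real.sq_sqrt hβL]
  have hgm : ∀ m, AEStronglyMeasurable (fun ω => g ω m) μ := fun m => by fun_prop
  have hgg' : Pairwise fun m n => IndepFun (fun ω => g ω m) (fun ω => g ω n) μ :=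
    fun m n hmn => hgg.indepFun hmn
  have hgL2 : ∀ m, MemLp (fun ω => g ω m) 2 μ := fun m =>
    memLp_two_of_integrable_norm_pow_four (hgm m) (hg4 m)
  have hSZ : ∀ ω, ∑ m, ‖h ω m‖ ^ 2 = (M * (ξ * √βL) ^ 2 + ∑ m, ‖g ω m‖ ^ 2)
      + 2 * (ξ * √βL) * (cexp (-(I * ψ ω)) * ∑ m, a m * conj (g ω m)).re := fun ω => by
    simp_rw [hdec, ← Complex.ofReal_mul]
    rw [sum_norm_sq_ofReal_mul_add (norm_cexp_neg_I_mul (ψ ω)) ha _ (g ω), Fintype.card_fin]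
  have hF : Measurable fun v : Fin M → ℂ =>
      ((M * (ξ * √βL) ^ 2 + ∑ m, ‖v m‖ ^ 2 : ℝ), ∑ m, a m * conj (v m)) := by fun_prop
  have hψSZ : IndepFun ψ (fun ω => (M * (ξ * √βL) ^ 2 + ∑ m, ‖g ω m‖ ^ 2,
      ∑ m, a m * conj (g ω m))) μ := hψg.comp measurable_id hF
  have hS : MemLp (fun ω => M * (ξ * √βL) ^ 2 + ∑ m, ‖g ω m‖ ^ 2) 2 μ :=
    (memLp_const ((M : ℝ) * (ξ * √βL) ^ 2)).add <| memLp_finsetSum _ fun m _ =>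
      memLp_norm_sq_of_integrable_norm_pow_four (hgm m) (hg4 m)
  have hZ : MemLp (fun ω => ∑ m, a m * conj (g ω m)) 2 μ :=
    memLp_finsetSum _ fun m _ => (hgL2 m).star.const_mul (a m)
  simp_rw [hSZ]
  rw [integral_sq_add_two_mul_re_cexp_mul hψ hψμ hψSZ hS hZ,
    integral_const_add_sum_norm_sq_sq hgm hgg' hg4 hg2 hg4',
    integral_norm_sum_mul_conj_sq hgL2 hgg' hg0 a]
  simp only [ha, hg2, hc, Fintype.card_fin, one_pow, one_mul, Finset.sum_const, Finset.card_univ,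
    nsmul_eq_mul]
  ring

/-- For a Rician channel block `h` with parameters `(ξ, βL, βN, a)` and
`β = ξ·βL + βN`, the fourth moment of the norm satisfies
`E[‖h‖⁴] = M²β² + M·βN² + 2M·ξ·βL·βN`. -/
theorem stmt7 {Ω : Type*} [MeasurableSpace Ω] (μ : Measure Ω) [IsProbabilityMeasure μ]
    (M : ℕ) (hM : 0 < M) (ξ βL βN : ℝ) (a : Fin M → ℂ) (h : Ω → Fin M → ℂ)
    (hR : IsRicianBlock μ ξ βL βN a h) :
    ∫ ω, (∑ m, ‖h ω m‖ ^ 2) ^ 2 ∂μ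
      = (M : ℝ) ^ 2 * (ξ * βL + βN) ^ 2 + M * βN ^ 2 + 2 * M * ξ * βL * βN :=
  stmt7_general μ M ξ βL βN a h hR
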